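/- With C_n the code of 2^{n-m}-fold self-concatenations of codewords of C_m: if a permutation φ of the 2ⁿ positions is an automorphism of C_n, then the induced map on codewords comes from an automorphism of C_m; consequently Aut(C_n) is isomorphic to the semidirect product (S_{2^{n-m}})^{2^m} ⋊ Aut(C_m), where Aut(C_m) acts by permuting the 2^m column factors. -/

import Mathlib

/-!
Because the words of `C` separate positions, an automorphism of the concatenated code maps
every column onto a column, and the induced permutation of columns is an automorphism of `C`.
Conversely, every permutation of `ι × κ` that moves columns by an automorphism of `C` preserves
the concatenated code. These permutations are exactly the image of the faithful action of the
wreath product `(κ → Perm ι) ⋊ Aut C` on `ι × κ`.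
-/

/-- The automorphism group of a code `C ⊆ 𝔽₂^ι`: position permutations preserving
membership in the code. -/
def codeAut {ι : Type*} (C : Set (ι → ZMod 2)) : Subgroup (Equiv.Perm ι) where
  carrier := { σ | ∀ f : ι → ZMod 2, f ∈ C ↔ f ∘ ⇑σ ∈ C }
  one_mem' := by intro f; simp
  mul_mem' := by
    intro a b ha hb f
    have h : f ∘ ⇑(a * b) = (f ∘ ⇑a) ∘ ⇑b := by
      funext x; simp [Equiv.Perm.coe_mul]
    rw [h]
    exact (ha f).trans (hb (f ∘ ⇑a))
  inv_mem' := by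
    intro a ha f
    have h := ha (f ∘ ⇑a⁻¹)
    have h2 : (f ∘ ⇑a⁻¹) ∘ ⇑a = f := by funext x; simp
    rw [h2] at h
    exact h.symm

/-- The action of a permutation of the index type on a product of groups indexed
by that type, permuting the factors. -/
def permPiHom {α : Type*} {G : Type*} [Group G] :
    Equiv.Perm α →* MulAut (α → G) where
  toFun σ :=
    { Equiv.arrowCongr σ (Equiv.refl G) with
      map_mul' := fun f g => rfl }
  map_one' := by ext f a; rfl
  map_mul' := by intro σ τ; ext f a; rfl

open Equiv

@[simp]
lemma permPiHom_apply {α G : Type*} [Group G] (σ : Perm α) (f : α → G) (a : α) :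
    permPiHom σ f a = f (σ⁻¹ a) :=
  rfl

section WreathPerm

variable {ι κ : Type*}

def wreathPerm (G : Subgroup (Perm κ)) :
    (κ → Perm ι) ⋊[permPiHom.comp G.subtype] G →* Perm (ι × κ) where
  toFun x := prodCongrLeft x.left * prodCongr 1 x.right
  map_one' := by ext p <;> rfl
  map_mul' x y := by
    ext p
    · simp
    · rfl

@[simp]
lemma wreathPerm_apply (G : Subgroup (Perm κ)) (x : (κ → Perm ι) ⋊[permPiHom.comp G.subtype] G)
    (p : ι × κ) : wreathPerm G x p = (x.left (x.right.1 p.2) p.1, x.right.1 p.2) :=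
  rfl

lemma wreathPerm_injective [Nonempty ι] (G : Subgroup (Perm κ)) :
    Function.Injective (wreathPerm (ι := ι) G) := by
  rw [injective_iff_map_eq_one]
  intro x hx
  have hright : x.right = 1 := Subtype.ext <| Perm.ext fun j =>
    congrArg Prod.snd (Perm.ext_iff.mp hx (Classical.arbitrary ι, j))
  refine SemidirectProduct.ext (funext fun j => Perm.ext fun r => ?_) hright
  simpa [hright] using congrArg Prod.fst (Perm.ext_iff.mp hx (r, j))

lemma exists_prodCongrLeft_eq {τ : Perm (ι × κ)} (hτ : ∀ p, (τ p).2 = p.2) :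
    ∃ π : κ → Perm ι, prodCongrLeft π = τ := by
  have hτinv : ∀ p, (τ⁻¹ p).2 = p.2 := fun p => by simpa using (hτ (τ⁻¹ p)).symm
  refine ⟨fun j => ⟨fun r => (τ (r, j)).1, fun r => (τ⁻¹ (r, j)).1, fun r => ?_, fun r => ?_⟩,
    Equiv.ext fun p => Prod.ext rfl (hτ p).symm⟩
  · dsimp only
    rw [show ((τ (r, j)).1, j) = τ (r, j) from Prod.ext rfl (hτ (r, j)).symm]
    simp
  · dsimp only
    rw [show ((τ⁻¹ (r, j)).1, j) = τ⁻¹ (r, j) from Prod.ext rfl (hτinv (r, j)).symm]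
    simp

lemma mem_range_wreathPerm_iff {G : Subgroup (Perm κ)} {σ : Perm (ι × κ)} :
    σ ∈ (wreathPerm G).range ↔ ∃ g ∈ G, ∀ p, (σ p).2 = g p.2 := by
  constructor
  · rintro ⟨x, rfl⟩
    exact ⟨x.right, x.right.2, fun p => rfl⟩
  · rintro ⟨g, hg, hσ⟩
    obtain ⟨π, hπ⟩ := exists_prodCongrLeft_eq (τ := σ * (prodCongr 1 g)⁻¹) fun p => by
      simpa using hσ ((prodCongr 1 g)⁻¹ p)
    exact ⟨⟨π, ⟨g, hg⟩⟩, by simp [wreathPerm, hπ]⟩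

end WreathPerm

section ConcatCode

variable {ι κ : Type*}

def concatCode (ι : Type*) (C : Set (κ → ZMod 2)) : Set (ι × κ → ZMod 2) :=
  {f | ∃ c ∈ C, ∀ p, f p = c p.2}

variable {C : Set (κ → ZMod 2)}

lemma comp_snd_mem_concatCode_iff [Nonempty ι] {c : κ → ZMod 2} :
    c ∘ Prod.snd ∈ concatCode ι C ↔ c ∈ C := by
  refine ⟨fun ⟨c', hc', h⟩ => ?_, fun hc => ⟨c, hc, fun _ => rfl⟩⟩
  rwa [show c = c' from funext fun j => h (Classical.arbitrary ι, j)]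

lemma mem_codeAut_concatCode {σ : Perm (ι × κ)} {g : Perm κ} (hg : g ∈ codeAut C)
    (hσ : ∀ p, (σ p).2 = g p.2) : σ ∈ codeAut (concatCode ι C) := by
  have hσinv : ∀ p, (σ⁻¹ p).2 = g⁻¹ p.2 := fun p => by
    rw [Perm.eq_inv_iff_eq, ← hσ]; simp
  intro f
  constructor
  · rintro ⟨c, hc, hf⟩
    exact ⟨c ∘ g, (hg c).1 hc, fun p => by simp [hf, hσ]⟩
  · rintro ⟨c, hc, hf⟩
    refine ⟨c ∘ ⇑g⁻¹, ((codeAut C).inv_mem hg c).1 hc, fun p => ?_⟩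
    have hfp := hf (σ⁻¹ p)
    rw [hσinv] at hfp
    simpa using hfp

/-- If `p` and `q` lie in one column but their images did not, a word of `C` separating the
image columns would give a word of the concatenated code separating `p` from `q`. -/
lemma snd_apply_eq_of_mem_codeAut_concatCode (hsep : C.SeparatesPoints)
    {σ : Perm (ι × κ)} (hσ : σ ∈ codeAut (concatCode ι C)) {p q : ι × κ} (hpq : p.2 = q.2) :
    (σ p).2 = (σ q).2 := by
  by_contra hne
  obtain ⟨c, hc, hcpq⟩ := hsep hne
  obtain ⟨c', -, h⟩ := (hσ (c ∘ Prod.snd)).1 ⟨c, hc, fun _ => rfl⟩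
  have hp := h p
  rw [hpq] at hp
  exact hcpq (hp.trans (h q).symm)

lemma exists_mem_codeAut_of_mem_codeAut_concatCode [Nonempty ι] (hsep : C.SeparatesPoints)
    {σ : Perm (ι × κ)} (hσ : σ ∈ codeAut (concatCode ι C)) :
    ∃ g ∈ codeAut C, ∀ p, (σ p).2 = g p.2 := by
  let r₀ := Classical.arbitrary ι
  let g₀ : κ → κ := fun j => (σ (r₀, j)).2
  have hσg₀ : ∀ p, (σ p).2 = g₀ p.2 := fun p =>
    snd_apply_eq_of_mem_codeAut_concatCode hsep hσ rfl
  have hg₀ : Function.Bijective g₀ := by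
    refine ⟨fun j j' hjj' => ?_, fun j => ⟨(σ⁻¹ (r₀, j)).2, ?_⟩⟩
    · simpa using snd_apply_eq_of_mem_codeAut_concatCode hsep ((codeAut _).inv_mem hσ)
        (p := σ (r₀, j)) (q := σ (r₀, j')) hjj'
    · simpa using (hσg₀ (σ⁻¹ (r₀, j))).symm
  refine ⟨Equiv.ofBijective g₀ hg₀, fun c => ?_, hσg₀⟩
  have hcomp : (c ∘ Prod.snd) ∘ σ = (c ∘ g₀) ∘ Prod.snd (α := ι) := funext fun p => by
    simp [hσg₀]
  rw [← comp_snd_mem_concatCode_iff (ι := ι), hσ, hcomp, comp_snd_mem_concatCode_iff]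
  rfl

lemma codeAut_concatCode_eq_range_wreathPerm [Nonempty ι] (hsep : C.SeparatesPoints) :
    codeAut (concatCode ι C) = (wreathPerm (codeAut C)).range := by
  ext σ
  rw [mem_range_wreathPerm_iff]
  exact ⟨exists_mem_codeAut_of_mem_codeAut_concatCode hsep,
    fun ⟨_, hg, hσ⟩ => mem_codeAut_concatCode hg hσ⟩

end ConcatCode

theorem stmt_7_general (n m : ℕ)
    (Cm : Submodule (ZMod 2) (Fin (2 ^ m) → ZMod 2))
    (hsep : ∀ j j' : Fin (2 ^ m), j ≠ j' → ∃ c ∈ Cm, c j ≠ c j') :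
    (∀ σ : Equiv.Perm (Fin (2 ^ (n - m)) × Fin (2 ^ m)),
        σ ∈ codeAut {f : Fin (2 ^ (n - m)) × Fin (2 ^ m) → ZMod 2 |
            ∃ c ∈ Cm, ∀ p, f p = c p.2} →
        ∃ g ∈ codeAut (Cm : Set (Fin (2 ^ m) → ZMod 2)),
          ∀ c ∈ Cm, ∀ p : Fin (2 ^ (n - m)) × Fin (2 ^ m),
            c ((σ p).2) = c (g p.2)) ∧
    Nonempty
      ((codeAut {f : Fin (2 ^ (n - m)) × Fin (2 ^ m) → ZMod 2 |
          ∃ c ∈ Cm, ∀ p, f p = c p.2}) ≃*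
        (Fin (2 ^ m) → Equiv.Perm (Fin (2 ^ (n - m))))
          ⋊[permPiHom.comp (codeAut (Cm : Set (Fin (2 ^ m) → ZMod 2))).subtype]
        (codeAut (Cm : Set (Fin (2 ^ m) → ZMod 2)))) := by
  have hsep' : (Cm : Set (Fin (2 ^ m) → ZMod 2)).SeparatesPoints := fun j j' => hsep j j'
  refine ⟨fun σ hσ => ?_, ⟨?_⟩⟩
  · obtain ⟨g, hg, hσg⟩ := exists_mem_codeAut_of_mem_codeAut_concatCode hsep' hσ
    exact ⟨g, hg, fun c _ p => by rw [hσg p]⟩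
  · exact (MulEquiv.subgroupCongr (codeAut_concatCode_eq_range_wreathPerm hsep')).trans
      (MonoidHom.ofInjective (wreathPerm_injective _)).symm

/-- Every automorphism of the self-concatenation code `C_n` induces an
automorphism of `C_m` on codewords, and `Aut(C_n)` is isomorphic to the
semidirect product `(S_{2^{n-m}})^{2^m} ⋊ Aut(C_m)`, with `Aut(C_m)` permuting
the `2^m` column factors. -/
theorem stmt_7 (n m : ℕ) (hmn : m < n)
    (Cm : Submodule (ZMod 2) (Fin (2 ^ m) → ZMod 2))
    (hsep : ∀ j j' : Fin (2 ^ m), j ≠ j' → ∃ c ∈ Cm, c j ≠ c j') :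
    (∀ σ : Equiv.Perm (Fin (2 ^ (n - m)) × Fin (2 ^ m)),
        σ ∈ codeAut {f : Fin (2 ^ (n - m)) × Fin (2 ^ m) → ZMod 2 |
            ∃ c ∈ Cm, ∀ p, f p = c p.2} →
        ∃ g ∈ codeAut (Cm : Set (Fin (2 ^ m) → ZMod 2)),
          ∀ c ∈ Cm, ∀ p : Fin (2 ^ (n - m)) × Fin (2 ^ m),
            c ((σ p).2) = c (g p.2)) ∧
    Nonempty
      ((codeAut {f : Fin (2 ^ (n - m)) × Fin (2 ^ m) → ZMod 2 |
          ∃ c ∈ Cm, ∀ p, f p = c p.2}) ≃*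
        (Fin (2 ^ m) → Equiv.Perm (Fin (2 ^ (n - m))))
          ⋊[permPiHom.comp (codeAut (Cm : Set (Fin (2 ^ m) → ZMod 2))).subtype]
        (codeAut (Cm : Set (Fin (2 ^ m) → ZMod 2)))) :=
  stmt_7_general n m Cm hsep
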